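/- arXiv:1708.08832 — 4 statements merged into one kernel-verified Lean document; each statement's English description precedes it below -/
import Mathlib

section
/- Let d = 1, c > 0, u, v, w ∈ ℝ, and define φ(x) = |x - u| + |x - v| + c·(x - w)². Set u' = min{u,v}, v' = max{u,v}, and α = min{|w - (u+v)/2|, 1/c}. Then a global minimizer of φ over ℝ is given by: x* = w if w ∈ [u', v']; x* = max{v', w - α} if w > v'; and x* = min{u', w + α} if w < u'. -/
/-!
Write `φ = f + c (· - w)²` with `f x = |x - u| + |x - v|`. Since the quadratic part is convex with
derivative `2c (x - w)`, a point `x*` minimizes `φ` as soon as `2c (w - x*)` is a subgradient of `f`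
at `x*`. For `w ∈ [u', v']` this is the subgradient `0` of `f` on its flat piece. For `w > v'` the
candidate `x* = max v' (w - α)` has `0 ≤ 2c (w - x*) ≤ 2`, and `2c (w - x*) = 2` unless `x* = v'`,
where `f` has a kink; in both cases this slope is a subgradient. The case `w < u'` is the mirror
image under `x ↦ -x`.
-/

def absQuad (c u v w x : ℝ) : ℝ := |x - u| + |x - v| + c * (x - w) ^ 2

lemma absQuad_neg (c u v w x : ℝ) : absQuad c (-u) (-v) (-w) (-x) = absQuad c u v w x := by
  simp only [absQuad, neg_sub_neg, abs_sub_comm u x, abs_sub_comm v x]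
  ring

lemma absQuad_le_of_subgradient {c u v w xs : ℝ} (hc : 0 ≤ c)
    (hsub : ∀ x, |xs - u| + |xs - v| + 2 * c * (w - xs) * (x - xs) ≤ |x - u| + |x - v|)
    (x : ℝ) : absQuad c u v w xs ≤ absQuad c u v w x := by
  unfold absQuad
  nlinarith [hsub x, mul_nonneg hc (sq_nonneg (x - xs))]

lemma abs_sub_add_abs_sub_subgradient_of_max_le {u v xs t : ℝ} (hxs : max u v ≤ xs)
    (ht₀ : 0 ≤ t) (ht₂ : t ≤ 2) (hkink : xs = max u v ∨ t = 2) (x : ℝ) :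
    |xs - u| + |xs - v| + t * (x - xs) ≤ |x - u| + |x - v| := by
  obtain ⟨hu, hv⟩ := max_le_iff.mp hxs
  rw [abs_of_nonneg (sub_nonneg.mpr hu), abs_of_nonneg (sub_nonneg.mpr hv)]
  rcases hkink with rfl | rfl
  · rcases le_total x (max u v) with hx | hx
    · have hflat : max u v - u + (max u v - v) = |v - u| := by
        linarith [max_sub_min_eq_abs u v, min_add_max u v]
      have : t * (x - max u v) ≤ 0 := mul_nonpos_of_nonneg_of_nonpos ht₀ (sub_nonpos.mpr hx)
      linarith [abs_sub_le v x u, abs_sub_comm v x]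
    · have : t * (x - max u v) ≤ 2 * (x - max u v) :=
        mul_le_mul_of_nonneg_right ht₂ (sub_nonneg.mpr hx)
      linarith [le_abs_self (x - u), le_abs_self (x - v)]
  · linarith [le_abs_self (x - u), le_abs_self (x - v)]

lemma absQuad_le_of_mem_uIcc {c u v w : ℝ} (hc : 0 ≤ c) (hw : w ∈ Set.uIcc u v) (x : ℝ) :
    absQuad c u v w w ≤ absQuad c u v w x := by
  refine absQuad_le_of_subgradient hc (fun x => ?_) x
  have hflat := dist_add_dist_of_mem_segment ((segment_eq_uIcc u v).symm ▸ hw)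
  simp only [Real.dist_eq, abs_sub_comm u w] at hflat
  rw [sub_self, mul_zero, zero_mul, add_zero, hflat]
  linarith [abs_sub_le u x v, abs_sub_comm u x]

lemma absQuad_le_of_max_lt {c u v w xs : ℝ} (hc : 0 < c) (hw : max u v < w)
    (hxs : xs = max (max u v) (w - min |w - (u + v) / 2| (1 / c))) (x : ℝ) :
    absQuad c u v w xs ≤ absQuad c u v w x := by
  set α := min |w - (u + v) / 2| (1 / c)
  have hα₀ : 0 ≤ α := le_min (abs_nonneg _) (by positivity)
  have hxs_le : xs ≤ w := hxs ▸ max_le hw.le (sub_le_self _ hα₀)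
  have hgap : w - xs ≤ 1 / c := by
    linarith [le_max_right (max u v) (w - α), min_le_right |w - (u + v) / 2| (1 / c)]
  have hslope : c * (w - xs) ≤ 1 :=
    calc c * (w - xs) ≤ c * (1 / c) := mul_le_mul_of_nonneg_left hgap hc.le
      _ = 1 := by field_simp
  refine absQuad_le_of_subgradient hc.le
    (abs_sub_add_abs_sub_subgradient_of_max_le (hxs ▸ le_max_left _ _) ?_ (by linarith) ?_) x
  · have := sub_nonneg.mpr hxs_le
    positivity
  rcases le_or_gt (w - α) (max u v) with h | h
  · exact Or.inl (hxs.trans (max_eq_left h))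
  · right
    have hmid : (u + v) / 2 ≤ max u v := by linarith [min_add_max u v, min_le_max (a := u) (b := v)]
    have hα_lt : α < |w - (u + v) / 2| := by
      rw [abs_of_pos (by linarith)]
      linarith
    have hα_eq : α = 1 / c := (min_choice _ _).resolve_left hα_lt.ne
    rw [hxs, max_eq_right h.le, hα_eq]
    field_simp
    ring

lemma absQuad_le_of_lt_min {c u v w xs : ℝ} (hc : 0 < c) (hw : w < min u v)
    (hxs : xs = min (min u v) (w + min |w - (u + v) / 2| (1 / c))) (x : ℝ) :
    absQuad c u v w xs ≤ absQuad c u v w x := by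
  rw [← absQuad_neg c u v w xs, ← absQuad_neg c u v w x]
  refine absQuad_le_of_max_lt hc (by rwa [max_neg_neg, neg_lt_neg_iff]) ?_ (-x)
  have hdist : |-w - (-u + -v) / 2| = |w - (u + v) / 2| := by
    rw [← abs_neg]
    ring_nf
  rw [hxs, max_neg_neg, hdist, ← neg_add', max_neg_neg]

theorem stmt_1 (c u v w : ℝ) (hc : 0 < c)
    (φ : ℝ → ℝ) (hφ : ∀ x, φ x = |x - u| + |x - v| + c * (x - w) ^ 2)
    (u' v' α : ℝ) (hu' : u' = min u v) (hv' : v' = max u v)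
    (hα : α = min |w - (u + v) / 2| (1 / c))
    (xstar : ℝ)
    (hx : xstar = if w ∈ Set.Icc u' v' then w
          else if w > v' then max v' (w - α) else min u' (w + α)) :
    ∀ x : ℝ, φ xstar ≤ φ x := by
  intro x
  rw [hφ, hφ]
  change absQuad c u v w xstar ≤ absQuad c u v w x
  subst hu' hv' hα hx
  split_ifs with hmid hright
  · exact absQuad_le_of_mem_uIcc hc.le hmid x
  · exact absQuad_le_of_max_lt hc hright rfl x
  · refine absQuad_le_of_lt_min hc ?_ rfl x
    rw [Set.mem_Icc, not_and_or, not_le, not_le] at hmid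
    exact hmid.resolve_right hright
end

section
/- Let g : [0, ∞) → ℝ be monotonically non-decreasing, let A ⊆ ℝ be a measurable set of finite Lebesgue measure, and let x ∈ ℝ. Let B be the origin-centered interval with the same Lebesgue measure as A, i.e., B = [-μ(A)/2, μ(A)/2]. Then ∫_A g(|x - q|) dq ≥ ∫_B g(|q|) dq. -/
/-!
Reflect `A` through `x` to get a set `A'` with `∫_A g(|x - q|) dq = ∫_{A'} g(|q|) dq` and
`μ A' = μ B`. On `B \ A'` one has `|q| ≤ r := μ(A)/2`, hence `g |q| ≤ g r`, while on `A' \ B` one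
has `|q| > r`, hence `g |q| ≥ g r`. Since `B \ A'` and `A' \ B` have the same measure, moving
mass from the former to the latter can only increase the integral.
-/

open MeasureTheory Set

section SetIntegral

variable {α : Type*} [MeasurableSpace α] {μ : Measure α} {f : α → ℝ} {s t : Set α} {c : ℝ}

theorem setIntegral_le_const_mul_measureReal (hs : MeasurableSet s) (hμs : μ s ≠ ⊤)
    (hf : ∀ x ∈ s, f x ≤ c) (hfint : IntegrableOn f s μ) :
    ∫ x in s, f x ∂μ ≤ c * μ.real s := by
  calc ∫ x in s, f x ∂μ ≤ ∫ _ in s, c ∂μ := setIntegral_mono_on hfint (integrableOn_const hμs) hs hf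
    _ = c * μ.real s := by rw [setIntegral_const, smul_eq_mul, mul_comm]

theorem setIntegral_le_setIntegral_of_sdiff_le_const_le
    (hs : MeasurableSet s) (ht : MeasurableSet t) (hfs : IntegrableOn f s μ)
    (hft : IntegrableOn f t μ) (hμ : μ s = μ t) (hμt : μ t ≠ ⊤)
    (hle : ∀ x ∈ t \ s, f x ≤ c) (hge : ∀ x ∈ s \ t, c ≤ f x) :
    ∫ x in t, f x ∂μ ≤ ∫ x in s, f x ∂μ := by
  have hsdiff : μ (t \ s) = μ (s \ t) :=
    measure_sdiff_symm ht.nullMeasurableSet hs.nullMeasurableSet hμ.symm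
      (measure_ne_top_of_subset inter_subset_left hμt)
  have hμts : μ (t \ s) ≠ ⊤ := measure_ne_top_of_subset sdiff_subset hμt
  calc ∫ x in t, f x ∂μ = ∫ x in t ∩ s, f x ∂μ + ∫ x in t \ s, f x ∂μ :=
        (integral_inter_add_sdiff hs hft).symm
    _ ≤ ∫ x in s ∩ t, f x ∂μ + c * μ.real (s \ t) := by
        rw [inter_comm, Measure.real, ← hsdiff]
        gcongr
        exact setIntegral_le_const_mul_measureReal (ht.diff hs) hμts hle (hft.mono_set sdiff_subset)
    _ ≤ ∫ x in s ∩ t, f x ∂μ + ∫ x in s \ t, f x ∂μ := by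
        gcongr
        exact setIntegral_ge_of_const_le_real (hs.diff ht) (hsdiff ▸ hμts) hge
          (hfs.mono_set sdiff_subset)
    _ = ∫ x in s, f x ∂μ := integral_inter_add_sdiff ht hfs

end SetIntegral

theorem integrableOn_comp_abs_Icc {g : ℝ → ℝ} (hg : MonotoneOn g (Ici 0)) (r : ℝ) :
    IntegrableOn (fun q => g |q|) (Icc (-r) r) := by
  have hneg : IntegrableOn (fun q => g |q|) (Icc (-r) 0) := by
    refine AntitoneOn.integrableOn_isCompact isCompact_Icc fun a ha b hb hab => ?_
    rw [abs_of_nonpos ha.2, abs_of_nonpos hb.2]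
    exact hg (neg_nonneg.2 hb.2) (neg_nonneg.2 ha.2) (neg_le_neg hab)
  have hpos : IntegrableOn (fun q => g |q|) (Icc 0 r) := by
    refine MonotoneOn.integrableOn_isCompact isCompact_Icc fun a ha b hb hab => ?_
    rw [abs_of_nonneg ha.1, abs_of_nonneg hb.1]
    exact hg ha.1 hb.1 hab
  refine (hneg.union hpos).mono_set fun q hq => ?_
  rcases le_total q 0 with h | h
  exacts [Or.inl ⟨hq.1, h⟩, Or.inr ⟨h, hq.2⟩]

theorem stmt_5 (g : ℝ → ℝ) (hg : MonotoneOn g (Set.Ici 0))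
    (A : Set ℝ) (hA : MeasurableSet A) (hAfin : volume A < ⊤) (x : ℝ)
    (hint : IntegrableOn (fun q => g |x - q|) A volume)
    (B : Set ℝ) (hB : B = Set.Icc (-(volume A).toReal / 2) ((volume A).toReal / 2)) :
    ∫ q in B, g |q| ≤ ∫ q in A, g |x - q| := by
  set r := (volume A).toReal / 2
  have hr : 0 ≤ r := by positivity
  obtain rfl : B = Icc (-r) r := by rw [hB, neg_div]
  have hrefl : MeasurePreserving (x - ·) volume volume := Measure.measurePreserving_sub_left _ x
  have hemb : MeasurableEmbedding (x - ·) := (MeasurableEquiv.subLeft x).measurableEmbedding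
  set A' := (x - ·) ⁻¹' A
  have hA' : (x - ·) ⁻¹' A' = A := by ext; simp [A']
  have hintA' : IntegrableOn (fun q => g |q|) A' := by
    rwa [← hrefl.integrableOn_comp_preimage hemb, hA']
  have hvol : volume A' = volume (Icc (-r) r) := by
    rw [hrefl.measure_preimage hA.nullMeasurableSet, Real.volume_Icc, sub_neg_eq_add, add_halves,
      ENNReal.ofReal_toReal hAfin.ne]
  rw [← hA', hrefl.setIntegral_preimage_emb hemb (fun q => g |q|)]
  refine setIntegral_le_setIntegral_of_sdiff_le_const_le (c := g r) (hA.preimage hrefl.measurable)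
    measurableSet_Icc hintA' (integrableOn_comp_abs_Icc hg r) hvol measure_Icc_lt_top.ne
    (fun q hq => hg (abs_nonneg q) hr (abs_le.2 hq.1))
    (fun q hq => hg hr (abs_nonneg q)
      (not_lt.1 fun hlt => hq.2 (Ioo_subset_Icc_self (abs_lt.1 hlt))))
end

section
/- Let h ≥ 0, r > 0, and n ≥ 1. For the uniform density f(q) = 1 on [0,1], the uniform placement x_i = (2i-1)/(2n), i = 1,…,n, minimizes P(x) = ∫₀¹ min_i (|x_i - q|² + h²)^{r/2} dq over all placements x ∈ ℝⁿ, and the minimum value equals 2n·∫₀^{1/(2n)} (u² + h²)^{r/2} du. -/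
/-!
Let `D q` be the distance from `q` to the nearest `x i`. The points with `D q ≤ s` lie in `n`
intervals of length `2 s`, so `D > s` on a subset of `(0, 1]` of measure at least `1 - 2 n s`,
which is `2 n` times the measure of `(s, 1/(2n)]`. For `g` nondecreasing on `[0, ∞)` this
comparison of superlevel sets integrates, by the layer-cake formula, to
`∫₀¹ g (D q) dq ≥ 2 n ∫₀^{1/(2n)} g`. For the uniform placement the intervals `[k/n, (k+1)/n]`
are the nearest-point cells, and each contributes `∫_{-1/(2n)}^{1/(2n)} g |u| du`, so equality
holds.
-/

open MeasureTheory Set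

theorem continuous_iInf_of_finite {ι : Type*} [Fintype ι] [Nonempty ι] {f : ι → ℝ → ℝ}
    (hf : ∀ i, Continuous (f i)) : Continuous fun q => ⨅ i, f i q := by
  simp only [← Finset.inf'_univ_eq_ciInf]
  exact Continuous.finset_inf'_apply Finset.univ_nonempty fun i _ => hf i

section LayerCake

variable {α β : Type*} [MeasurableSpace α] [MeasurableSpace β] {μ : Measure α} {ν : Measure β}

theorem integral_le_integral_of_meas_lt_le {F : α → ℝ} {G : β → ℝ}
    (hF : 0 ≤ᵐ[μ] F) (hFi : Integrable F μ) (hG : 0 ≤ᵐ[ν] G) (hGm : AEMeasurable G ν)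
    (h : ∀ t, ν {b | t < G b} ≤ μ {a | t < F a}) :
    ∫ b, G b ∂ν ≤ ∫ a, F a ∂μ := by
  rw [integral_eq_lintegral_of_nonneg_ae hG hGm.aestronglyMeasurable,
    integral_eq_lintegral_of_nonneg_ae hF hFi.aestronglyMeasurable]
  refine ENNReal.toReal_mono
    ((lintegral_ofReal_ne_top_iff_integrable hFi.aestronglyMeasurable hF).2 hFi) ?_
  rw [lintegral_eq_lintegral_meas_lt ν hG hGm, lintegral_eq_lintegral_meas_lt μ hF hFi.aemeasurable]
  exact lintegral_mono fun t => h t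

end LayerCake

theorem ofReal_one_sub_le_volume_forall_lt_abs_sub {n : ℕ} (x : Fin n → ℝ) {s : ℝ} (hs : 0 ≤ s) :
    ENNReal.ofReal (1 - 2 * n * s) ≤ volume ({q | ∀ i, s < |x i - q|} ∩ Ioc 0 1) := by
  have hcover : Ioc (0 : ℝ) 1 ⊆
      ({q | ∀ i, s < |x i - q|} ∩ Ioc 0 1) ∪ ⋃ i, Icc (x i - s) (x i + s) := by
    intro q hq
    by_cases hfar : ∀ i, s < |x i - q|
    · exact Or.inl ⟨hfar, hq⟩
    · obtain ⟨i, hi⟩ := not_forall.1 hfar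
      rw [not_lt, abs_sub_le_iff] at hi
      exact Or.inr (mem_iUnion.2 ⟨i, by constructor <;> linarith [hi.1, hi.2]⟩)
  have hnear : volume (⋃ i, Icc (x i - s) (x i + s)) ≤ ENNReal.ofReal (2 * n * s) :=
    calc volume (⋃ i, Icc (x i - s) (x i + s))
        ≤ ∑ i, volume (Icc (x i - s) (x i + s)) := measure_iUnion_fintype_le _ _
      _ = ENNReal.ofReal (2 * n * s) := by
        simp only [Real.volume_Icc, add_sub_sub_cancel, Finset.sum_const, Finset.card_univ,
          Fintype.card_fin, nsmul_eq_mul]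
        rw [← ENNReal.ofReal_natCast, ← ENNReal.ofReal_mul (Nat.cast_nonneg n)]
        ring_nf
  rw [ENNReal.ofReal_sub _ (by positivity), tsub_le_iff_right]
  calc ENNReal.ofReal 1 = volume (Ioc (0 : ℝ) 1) := by simp
    _ ≤ _ := measure_mono hcover
    _ ≤ _ := measure_union_le _ _
    _ ≤ _ := by gcongr

theorem ofReal_two_mul_volume_lt_le_volume_lt_iInf {n : ℕ} [NeZero n] {g : ℝ → ℝ}
    (hg : MonotoneOn g (Ici 0)) (x : Fin n → ℝ) (t : ℝ) :
    ENNReal.ofReal (2 * n) * volume ({u | t < g u} ∩ Ioc 0 (1 / (2 * n)))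
      ≤ volume ({q | t < ⨅ i, g |x i - q|} ∩ Ioc 0 1) := by
  set S := {u | t < g u} ∩ Ioc 0 (1 / (2 * n))
  rcases S.eq_empty_or_nonempty with hS | hS
  · simp [hS]
  have hbdd : BddBelow S := ⟨0, fun u hu => hu.2.1.le⟩
  set s := sInf S
  have hs : 0 ≤ s := le_csInf hS fun u hu => hu.2.1.le
  have hS_sub : S ⊆ Icc s (1 / (2 * n)) := fun u hu => ⟨csInf_le hbdd hu, hu.2.2⟩
  -- A point farther than `s = inf S` from every `x i` already gets a value above `t`.
  have hfar : {q | ∀ i, s < |x i - q|} ⊆ {q | t < ⨅ i, g |x i - q|} := by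
    intro q hq
    obtain ⟨i, hi⟩ := exists_eq_ciInf_of_finite (f := fun i => g |x i - q|)
    obtain ⟨u, hu, hlt⟩ := exists_lt_of_csInf_lt hS (hq i)
    show t < ⨅ i, g |x i - q|
    rw [← hi]
    exact hu.1.trans_le (hg hu.2.1.le (abs_nonneg (x i - q)) hlt.le)
  have hn : (0 : ℝ) < n := Nat.cast_pos.2 (NeZero.pos n)
  calc ENNReal.ofReal (2 * n) * volume S
      ≤ ENNReal.ofReal (2 * n) * ENNReal.ofReal (1 / (2 * n) - s) := by
        gcongr
        exact (measure_mono hS_sub).trans_eq Real.volume_Icc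
    _ = ENNReal.ofReal (1 - 2 * n * s) := by
        rw [← ENNReal.ofReal_mul (by positivity)]
        congr 1
        field_simp
    _ ≤ _ := ofReal_one_sub_le_volume_forall_lt_abs_sub x hs
    _ ≤ _ := measure_mono (inter_subset_inter_left _ hfar)

theorem two_mul_integral_le_integral_iInf_comp_abs_sub {n : ℕ} [NeZero n] {g : ℝ → ℝ}
    (hg : Continuous g) (hgm : MonotoneOn g (Ici 0)) (hg0 : 0 ≤ g 0) (x : Fin n → ℝ) :
    2 * n * ∫ u in (0 : ℝ)..(1 / (2 * n)), g u ≤ ∫ q in (0 : ℝ)..1, ⨅ i, g |x i - q| := by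
  have hgnn : ∀ u, 0 ≤ u → 0 ≤ g u := fun u hu => hg0.trans (hgm (mem_Ici.2 le_rfl) hu hu)
  have hF : Continuous fun q => ⨅ i, g |x i - q| :=
    continuous_iInf_of_finite fun i => hg.comp (continuous_const.sub continuous_id).abs
  rw [intervalIntegral.integral_of_le zero_le_one, intervalIntegral.integral_of_le (by positivity)]
  calc 2 * n * ∫ u in Ioc (0 : ℝ) (1 / (2 * n)), g u
      = ∫ u, g u ∂(ENNReal.ofReal (2 * n) • volume.restrict (Ioc (0 : ℝ) (1 / (2 * n)))) := by
        rw [integral_smul_measure, ENNReal.toReal_ofReal (by positivity), smul_eq_mul]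
    _ ≤ _ := integral_le_integral_of_meas_lt_le
      (ae_of_all _ fun q => le_ciInf fun i => hgnn _ (abs_nonneg _)) hF.integrableOn_Ioc
      (Measure.ae_smul_measure
        (ae_restrict_of_forall_mem measurableSet_Ioc fun u hu => hgnn u hu.1.le) _)
      hg.aemeasurable fun t => ?_
  rw [Measure.smul_apply, Measure.restrict_apply' measurableSet_Ioc,
    Measure.restrict_apply' measurableSet_Ioc, smul_eq_mul]
  exact ofReal_two_mul_volume_lt_le_volume_lt_iInf hgm x t

theorem intervalIntegral.integral_comp_abs {g : ℝ → ℝ} (hg : Continuous g) {c : ℝ} (hc : 0 ≤ c) :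
    ∫ u in -c..c, g |u| = 2 * ∫ u in 0..c, g u := by
  have hga : Continuous fun u => g |u| := hg.comp continuous_abs
  have hneg : ∫ u in -c..0, g |u| = ∫ u in 0..c, g |u| := by
    simpa using (intervalIntegral.integral_comp_neg (a := 0) (b := c) fun u => g |u|).symm
  have hpos : ∫ u in 0..c, g |u| = ∫ u in 0..c, g u :=
    intervalIntegral.integral_congr fun u hu => by
      rw [uIcc_of_le hc] at hu
      rw [abs_of_nonneg hu.1]
  rw [← intervalIntegral.integral_add_adjacent_intervals (b := 0)
    (hga.intervalIntegrable _ _) (hga.intervalIntegrable _ _), hneg, hpos]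
  ring

section UniformPlacement

variable {n : ℕ} {g : ℝ → ℝ}

noncomputable def uniformPlacement (n : ℕ) (i : Fin n) : ℝ := (2 * i + 1) / (2 * n)

theorem abs_uniformPlacement_sub_le {k : Fin n} {q : ℝ}
    (hq : q ∈ Icc ((k : ℝ) / n) ((k + 1) / n)) (i : Fin n) :
    |uniformPlacement n k - q| ≤ |uniformPlacement n i - q| := by
  have hn : (0 : ℝ) < n := Nat.cast_pos.2 k.pos
  have hscale : ∀ j : Fin n, |uniformPlacement n j - q| = |2 * j + 1 - 2 * n * q| / (2 * n) := by
    intro j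
    rw [uniformPlacement, show (2 * (j : ℝ) + 1) / (2 * n) - q = (2 * j + 1 - 2 * n * q) / (2 * n)
      by field_simp, abs_div, abs_of_pos (mul_pos two_pos hn)]
  rw [hscale, hscale, div_le_div_iff_of_pos_right (mul_pos two_pos hn)]
  obtain ⟨hql, hqr⟩ := hq
  rw [div_le_iff₀ hn] at hql
  rw [le_div_iff₀ hn] at hqr
  -- `2 n q` lies within `1` of the odd number `2k + 1`; every other `2i + 1` is at least `1` away.
  have hk : |2 * (k : ℝ) + 1 - 2 * n * q| ≤ 1 := abs_le.2 ⟨by linarith, by linarith⟩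
  rcases lt_trichotomy i k with hik | rfl | hik
  · have : (i : ℝ) + 1 ≤ k := by exact_mod_cast hik
    exact hk.trans (le_abs.2 (Or.inr (by linarith)))
  · exact le_rfl
  · have : (k : ℝ) + 1 ≤ i := by exact_mod_cast hik
    exact hk.trans (le_abs.2 (Or.inl (by linarith)))

theorem iInf_comp_abs_uniformPlacement_sub (hg : MonotoneOn g (Ici 0)) {k : Fin n} {q : ℝ}
    (hq : q ∈ Icc ((k : ℝ) / n) ((k + 1) / n)) :
    ⨅ i, g |uniformPlacement n i - q| = g |uniformPlacement n k - q| :=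
  have : Nonempty (Fin n) := ⟨k⟩
  le_antisymm (ciInf_le (Finite.bddBelow_range _) k) <| le_ciInf fun i =>
    hg (abs_nonneg (uniformPlacement n k - q)) (abs_nonneg (uniformPlacement n i - q))
      (abs_uniformPlacement_sub_le hq i)

theorem integral_iInf_comp_abs_uniformPlacement_sub [NeZero n] (hg : Continuous g)
    (hgm : MonotoneOn g (Ici 0)) :
    ∫ q in (0 : ℝ)..1, ⨅ i, g |uniformPlacement n i - q|
      = 2 * n * ∫ u in (0 : ℝ)..(1 / (2 * n)), g u := by
  have hn : (0 : ℝ) < n := Nat.cast_pos.2 (NeZero.pos n)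
  have hF : Continuous fun q => ⨅ i, g |uniformPlacement n i - q| :=
    continuous_iInf_of_finite fun i => hg.comp (continuous_const.sub continuous_id).abs
  have hcell : ∀ k < n,
      ∫ q in (k / n : ℝ)..((k + 1 : ℕ) / n), ⨅ i, g |uniformPlacement n i - q|
        = 2 * ∫ u in (0 : ℝ)..(1 / (2 * n)), g u := by
    intro k hk
    have hle : (k / n : ℝ) ≤ (k + 1 : ℕ) / n := by gcongr; simp
    rw [intervalIntegral.integral_congr (g := fun q => g |uniformPlacement n ⟨k, hk⟩ - q|)
        fun q hq => iInf_comp_abs_uniformPlacement_sub hgm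
          (by rw [uIcc_of_le hle] at hq; exact_mod_cast hq),
      intervalIntegral.integral_comp_sub_left (fun u => g |u|),
      show uniformPlacement n ⟨k, hk⟩ - (k + 1 : ℕ) / n = -(1 / (2 * n)) by
        simp only [uniformPlacement]; push_cast; field_simp; ring,
      show uniformPlacement n ⟨k, hk⟩ - k / n = 1 / (2 * n) by
        simp only [uniformPlacement]; field_simp; ring,
      intervalIntegral.integral_comp_abs hg (by positivity)]
  have hsum := intervalIntegral.sum_integral_adjacent_intervals
    (a := fun k : ℕ => (k / n : ℝ)) (n := n) fun k _ => hF.intervalIntegrable (μ := volume) _ _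
  simp only [Nat.cast_zero, zero_div, div_self hn.ne'] at hsum
  rw [← hsum, Finset.sum_congr rfl fun k hk => hcell k (Finset.mem_range.1 hk)]
  simp only [Finset.sum_const, Finset.card_range, nsmul_eq_mul]
  ring

end UniformPlacement

theorem stmt_7_general (h r : ℝ) (hr : 0 < r) (n : ℕ) (hn : 1 ≤ n)
    (P : (Fin n → ℝ) → ℝ)
    (hP : ∀ x : Fin n → ℝ,
      P x = ∫ q in (0:ℝ)..1, ⨅ i : Fin n, ((x i - q) ^ 2 + h ^ 2) ^ (r / 2))
    (xu : Fin n → ℝ) (hxu : ∀ i : Fin n, xu i = (2 * (i : ℝ) + 1) / (2 * n)) :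
    (∀ x : Fin n → ℝ, P xu ≤ P x) ∧
    P xu = 2 * n * ∫ u in (0:ℝ)..(1 / (2 * n)), (u ^ 2 + h ^ 2) ^ (r / 2) := by
  have : NeZero n := ⟨by omega⟩
  set g : ℝ → ℝ := fun u => (u ^ 2 + h ^ 2) ^ (r / 2)
  have hg : Continuous g :=
    (by fun_prop : Continuous fun u : ℝ => u ^ 2 + h ^ 2).rpow_const fun _ => Or.inr (by positivity)
  have hgm : MonotoneOn g (Ici 0) := fun u hu v _ huv =>
    Real.rpow_le_rpow (by positivity) (by gcongr) (by positivity)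
  have hP' : ∀ x, P x = ∫ q in (0:ℝ)..1, ⨅ i, g |x i - q| := fun x => by simp [hP, g, sq_abs]
  obtain rfl : xu = uniformPlacement n := funext hxu
  have huniform : P (uniformPlacement n) = 2 * n * ∫ u in (0:ℝ)..(1 / (2 * n)), g u := by
    rw [hP', integral_iInf_comp_abs_uniformPlacement_sub hg hgm]
  refine ⟨fun x => ?_, huniform⟩
  rw [huniform, hP']
  exact two_mul_integral_le_integral_iInf_comp_abs_sub hg hgm (by positivity) x

theorem stmt_7 (h r : ℝ) (hh : 0 ≤ h) (hr : 0 < r) (n : ℕ) (hn : 1 ≤ n)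
    (P : (Fin n → ℝ) → ℝ)
    (hP : ∀ x : Fin n → ℝ,
      P x = ∫ q in (0:ℝ)..1, ⨅ i : Fin n, ((x i - q) ^ 2 + h ^ 2) ^ (r / 2))
    (xu : Fin n → ℝ) (hxu : ∀ i : Fin n, xu i = (2 * (i : ℝ) + 1) / (2 * n)) :
    (∀ x : Fin n → ℝ, P xu ≤ P x) ∧
    P xu = 2 * n * ∫ u in (0:ℝ)..(1 / (2 * n)), (u ^ 2 + h ^ 2) ^ (r / 2) :=
  stmt_7_general h r hr n hn P hP xu hxu
end

section
/- Let n ≥ 1 and r > 0. For the uniform density on [0,1], the uniform quantizer codebook x_i = (2i-1)/(2n) achieves ∫₀¹ min_i |x_i - q|^r dq = 1/((1+r)·(2n)^r), and this is the minimum over all codebooks of size n. -/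
/-!
Write `E q = min_i |x_i - q| ^ r`. Where `E ≤ s ^ r`, the point `q` lies within `s` of a
codepoint, so `{E ≤ s ^ r}` is covered by `n` intervals of length `2 s` and `{E > t}` has
measure at least `1 - 2 n t ^ (1 / r)` in `[0, 1]`. Integrating this bound over
`0 < t ≤ (2 n) ^ (-r)` in the layer-cake formula bounds `∫₀¹ E` below by
`1 / ((1 + r) (2 n) ^ r)` for every codebook. For the uniform codebook, bounding `E` on each
cell `[k / n, (k + 1) / n]` by the distance to its midpoint gives the same value from above.
-/

open MeasureTheory Set Real

noncomputable def quantizationError {ι : Type*} (r : ℝ) (x : ι → ℝ) (q : ℝ) : ℝ :=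
  ⨅ i, |x i - q| ^ r

section QuantizationError

variable {ι : Type*} [Fintype ι] {r : ℝ} (x : ι → ℝ)

theorem quantizationError_le (q : ℝ) (i : ι) : quantizationError r x q ≤ |x i - q| ^ r :=
  ciInf_le (Finite.bddBelow_range _) i

variable [Nonempty ι]

theorem continuous_quantizationError (hr : 0 ≤ r) : Continuous (quantizationError r x) := by
  have := Continuous.finset_inf'_apply Finset.univ_nonempty fun i (_ : i ∈ Finset.univ) =>
    ((continuous_sub_left (x i)).abs.rpow_const fun _ => Or.inr hr)
  simp only [Finset.inf'_univ_eq_ciInf] at this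
  exact this

theorem exists_abs_sub_le_of_quantizationError_le (hr : 0 < r) {q s : ℝ} (hs : 0 ≤ s)
    (h : quantizationError r x q ≤ s ^ r) : ∃ i, |x i - q| ≤ s := by
  obtain ⟨i, hi⟩ := exists_eq_ciInf_of_finite (f := fun i => |x i - q| ^ r)
  exact ⟨i, (rpow_le_rpow_iff (abs_nonneg _) hs hr).mp (hi.trans_le h)⟩

end QuantizationError

theorem measureReal_iUnion_closedBall_le {ι : Type*} [Fintype ι] {μ : Measure ℝ}
    (hμ : μ ≤ volume) (x : ι → ℝ) {s : ℝ} (hs : 0 ≤ s) :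
    μ.real (⋃ i, Metric.closedBall (x i) s) ≤ Fintype.card ι * (2 * s) := by
  have hball (i : ι) : μ.real (Metric.closedBall (x i) s) ≤ 2 * s := by
    rw [← volume_real_closedBall hs]
    exact ENNReal.toReal_mono measure_closedBall_lt_top.ne (hμ _)
  calc μ.real (⋃ i, Metric.closedBall (x i) s)
      ≤ ∑ i, μ.real (Metric.closedBall (x i) s) := measureReal_iUnion_fintype_le _
    _ ≤ ∑ _i : ι, 2 * s := Finset.sum_le_sum fun i _ => hball i
    _ = Fintype.card ι * (2 * s) := by simp

theorem setIntegral_Ioc_le_integral_of_le_measureReal_lt {α : Type*} [MeasurableSpace α]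
    {μ : Measure α} {f : α → ℝ} (hf : Integrable f μ) (hf₀ : 0 ≤ᵐ[μ] f) {φ : ℝ → ℝ} {T : ℝ}
    (hφ : IntegrableOn φ (Ioc 0 T)) (hle : ∀ t ∈ Ioc 0 T, φ t ≤ μ.real {a | t < f a}) :
    ∫ t in Ioc 0 T, φ t ≤ ∫ a, f a ∂μ := by
  have htail : IntegrableOn (fun t => μ.real {a | t < f a}) (Ioi 0) := by
    have hanti : Antitone fun t => μ {a | t < f a} :=
      fun _ _ hst => measure_mono fun _ h => hst.trans_lt h
    refine integrable_toReal_of_lintegral_ne_top hanti.measurable.aemeasurable ?_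
    rw [← lintegral_eq_lintegral_meas_lt μ hf₀ hf.aemeasurable]
    exact hf.lintegral_lt_top.ne
  rw [hf.integral_eq_integral_meas_lt hf₀]
  calc ∫ t in Ioc 0 T, φ t ≤ ∫ t in Ioc 0 T, μ.real {a | t < f a} :=
        setIntegral_mono_on hφ (htail.mono_set Ioc_subset_Ioi_self) measurableSet_Ioc hle
    _ ≤ ∫ t in Ioi 0, μ.real {a | t < f a} :=
        setIntegral_mono_set htail (.of_forall fun _ => measureReal_nonneg)
          Ioc_subset_Ioi_self.eventuallyLE

theorem integral_one_sub_mul_rpow_inv {a r : ℝ} (ha : 0 < a) (hr : 0 < r) :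
    ∫ t in (0 : ℝ)..(a ^ r)⁻¹, (1 - a * t ^ r⁻¹) = 1 / ((1 + r) * a ^ r) := by
  have hint : IntervalIntegrable (fun t : ℝ => t ^ r⁻¹) volume 0 (a ^ r)⁻¹ :=
    (continuous_id.rpow_const fun _ => Or.inr (by positivity)).intervalIntegrable _ _
  have hroot : ((a ^ r)⁻¹) ^ r⁻¹ = a⁻¹ := by
    rw [← inv_rpow ha.le, rpow_rpow_inv (inv_nonneg.2 ha.le) hr.ne']
  rw [intervalIntegral.integral_sub intervalIntegrable_const (hint.const_mul a),
    intervalIntegral.integral_const, intervalIntegral.integral_const_mul,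
    integral_rpow (Or.inl (by linarith [inv_pos.2 hr])), zero_rpow (by positivity),
    rpow_add (by positivity), rpow_one, hroot]
  simp only [smul_eq_mul, mul_one, sub_zero]
  field_simp
  ring

theorem integral_abs_sub_rpow_centered {r : ℝ} (hr : 0 ≤ r) (c : ℝ) {h : ℝ} (hh : 0 ≤ h) :
    ∫ q in (c - h)..(c + h), |c - q| ^ r = 2 * h ^ (r + 1) / (r + 1) := by
  have hcont : Continuous fun u : ℝ => |u| ^ r := continuous_abs.rpow_const fun _ => Or.inr hr
  have hright : ∫ u in (0 : ℝ)..h, |u| ^ r = h ^ (r + 1) / (r + 1) := by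
    rw [intervalIntegral.integral_congr (g := fun u => u ^ r) fun u hu => ?_,
      integral_rpow (Or.inl (by linarith)), zero_rpow (by linarith), sub_zero]
    rw [uIcc_of_le hh] at hu
    simp only [abs_of_nonneg hu.1]
  have hleft : ∫ u in -h..0, |u| ^ r = ∫ u in (0 : ℝ)..h, |u| ^ r := by
    simpa using (intervalIntegral.integral_comp_neg (a := 0) (b := h) fun u => |u| ^ r).symm
  calc ∫ q in (c - h)..(c + h), |c - q| ^ r = ∫ u in -h..h, |u| ^ r := by
        rw [intervalIntegral.integral_comp_sub_left (fun u => |u| ^ r) c, sub_add_cancel_left,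
          sub_sub_cancel]
    _ = (∫ u in -h..0, |u| ^ r) + ∫ u in (0 : ℝ)..h, |u| ^ r := by
        rw [intervalIntegral.integral_add_adjacent_intervals (hcont.intervalIntegrable _ _)
          (hcont.intervalIntegrable _ _)]
    _ = 2 * h ^ (r + 1) / (r + 1) := by
        rw [hleft, hright]
        ring

section UnitInterval

variable {ι : Type*} [Fintype ι] [Nonempty ι] {r : ℝ}

theorem one_sub_le_measureReal_lt_quantizationError (hr : 0 < r) (x : ι → ℝ) {s : ℝ}
    (hs : 0 ≤ s) :
    1 - 2 * Fintype.card ι * s ≤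
      (volume.restrict (Ioc (0 : ℝ) 1)).real {q | s ^ r < quantizationError r x q} := by
  set μ := volume.restrict (Ioc (0 : ℝ) 1)
  set A := {q | s ^ r < quantizationError r x q}
  have hA : MeasurableSet A :=
    measurableSet_lt measurable_const (continuous_quantizationError x hr.le).measurable
  have hAc : Aᶜ ⊆ ⋃ i, Metric.closedBall (x i) s := by
    intro q hq
    obtain ⟨i, hi⟩ := exists_abs_sub_le_of_quantizationError_le x hr hs (not_lt.mp hq)
    exact mem_iUnion.mpr ⟨i, by rwa [Metric.mem_closedBall, Real.dist_eq, abs_sub_comm]⟩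
  have hμ : μ.real univ = 1 := by simp [μ]
  calc 1 - 2 * Fintype.card ι * s
      ≤ μ.real univ - μ.real (⋃ i, Metric.closedBall (x i) s) := by
        rw [hμ]
        linarith [measureReal_iUnion_closedBall_le Measure.restrict_le_self x hs (μ := μ)]
    _ ≤ μ.real univ - μ.real Aᶜ := by gcongr; exact measure_ne_top μ _
    _ = μ.real A := by rw [measureReal_compl hA]; ring

theorem one_div_le_integral_quantizationError (hr : 0 < r) (x : ι → ℝ) :
    1 / ((1 + r) * (2 * Fintype.card ι) ^ r) ≤ ∫ q in (0 : ℝ)..1, quantizationError r x q := by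
  have hN : (0 : ℝ) < 2 * Fintype.card ι := by have := Fintype.card_pos (α := ι); positivity
  have hcont := continuous_quantizationError x hr.le
  have hφ : Continuous fun t : ℝ => 1 - 2 * Fintype.card ι * t ^ r⁻¹ :=
    continuous_const.sub <| continuous_const.mul <|
      continuous_id.rpow_const fun _ => Or.inr (by positivity)
  rw [← integral_one_sub_mul_rpow_inv hN hr, intervalIntegral.integral_of_le (by positivity),
    intervalIntegral.integral_of_le zero_le_one]
  refine setIntegral_Ioc_le_integral_of_le_measureReal_lt hcont.integrableOn_Ioc
    (.of_forall fun q => Real.iInf_nonneg fun i => rpow_nonneg (abs_nonneg _) r)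
    hφ.integrableOn_Ioc fun t ht => ?_
  simpa only [rpow_inv_rpow ht.1.le hr.ne'] using
    one_sub_le_measureReal_lt_quantizationError hr x (rpow_nonneg ht.1.le r⁻¹)

end UnitInterval

theorem integral_quantizationError_uniform_le {r : ℝ} (hr : 0 ≤ r) {n : ℕ} [NeZero n] :
    ∫ q in (0 : ℝ)..1, quantizationError r (fun i : Fin n => (2 * (i : ℝ) + 1) / (2 * n)) q ≤
      1 / ((1 + r) * (2 * n) ^ r) := by
  set x := fun i : Fin n => (2 * (i : ℝ) + 1) / (2 * n)
  have hn : (0 : ℝ) < n := by exact_mod_cast Nat.pos_of_neZero n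
  set h : ℝ := (2 * n)⁻¹
  have hh : 0 < h := by positivity
  have hcont := continuous_quantizationError x hr
  have hcell : ∀ k < n, ∫ q in (k / n : ℝ)..((k + 1 : ℕ) / n), quantizationError r x q ≤
      2 * h ^ (r + 1) / (r + 1) := by
    intro k hk
    have hlo : (k / n : ℝ) = x ⟨k, hk⟩ - h := by simp only [x, h]; field_simp; ring
    have hhi : ((k + 1 : ℕ) / n : ℝ) = x ⟨k, hk⟩ + h := by
      simp only [x, h]; push_cast; field_simp; ring
    rw [hlo, hhi, ← integral_abs_sub_rpow_centered hr (x ⟨k, hk⟩) hh.le]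
    refine intervalIntegral.integral_mono_on (by linarith) (hcont.intervalIntegrable _ _)
      (((continuous_sub_left _).abs.rpow_const fun _ => Or.inr hr).intervalIntegrable _ _)
      fun q _ => quantizationError_le x q ⟨k, hk⟩
  have hsum := intervalIntegral.sum_integral_adjacent_intervals (a := fun k : ℕ => (k / n : ℝ))
    (n := n) (μ := volume) (f := quantizationError r x) fun k _ => hcont.intervalIntegrable _ _
  simp only [Nat.cast_zero, zero_div, div_self hn.ne'] at hsum
  calc ∫ q in (0 : ℝ)..1, quantizationError r x q
      = ∑ k ∈ Finset.range n, ∫ q in (k / n : ℝ)..((k + 1 : ℕ) / n), quantizationError r x q :=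
        hsum.symm
    _ ≤ ∑ _k ∈ Finset.range n, 2 * h ^ (r + 1) / (r + 1) :=
        Finset.sum_le_sum fun k hk => hcell k (Finset.mem_range.mp hk)
    _ = 1 / ((1 + r) * (2 * n) ^ r) := by
        rw [Finset.sum_const, Finset.card_range, nsmul_eq_mul, rpow_add_one hh.ne',
          inv_rpow (by positivity)]
        simp only [h]
        field_simp
        ring

theorem stmt_8 (r : ℝ) (hr : 0 < r) (n : ℕ) (hn : 1 ≤ n)
    (D : (Fin n → ℝ) → ℝ)
    (hD : ∀ x : Fin n → ℝ, D x = ∫ q in (0:ℝ)..1, ⨅ i : Fin n, |x i - q| ^ r)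
    (xu : Fin n → ℝ) (hxu : ∀ i : Fin n, xu i = (2 * (i : ℝ) + 1) / (2 * n)) :
    D xu = 1 / ((1 + r) * (2 * n) ^ r) ∧ (∀ x : Fin n → ℝ, D xu ≤ D x) := by
  have : NeZero n := ⟨by omega⟩
  have hlower (x : Fin n → ℝ) : 1 / ((1 + r) * (2 * n) ^ r) ≤ D x := by
    have h := one_div_le_integral_quantizationError hr x
    rw [Fintype.card_fin] at h
    rwa [hD]
  have hval : D xu = 1 / ((1 + r) * (2 * n) ^ r) := by
    refine le_antisymm ?_ (hlower xu)
    rw [hD, funext hxu]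
    exact integral_quantizationError_uniform_le hr.le
  exact ⟨hval, fun x => hval ▸ hlower x⟩
end
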